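/- If U is a T0-balanced collection and U ⊆ V for a collection V of coalitions, then the collection span(U) ∩ V (coalitions of V whose indicator vectors lie in the linear span of indicators of U) is T0-balanced. -/

import Mathlib

open Finset

/-- Indicator vector of a coalition `S ⊆ {1,…,n}` in `ℝ^n`. -/
noncomputable def ind (n : ℕ) (S : Finset (Fin n)) : Fin n → ℝ := fun i => if i ∈ S then 1 else 0

/-- `T` is `T0`-balanced: there are weights `γ ≥ 0` on `T0` and `ω > 0` on `T` with
`e(N) = Σ_{S∈T0} γ_S e(S) + Σ_{S∈T} ω_S e(S)`. -/
def IsT0Balanced (n : ℕ) (T0 T : Finset (Finset (Fin n))) : Prop :=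
  ∃ γ ω : Finset (Fin n) → ℝ,
    (∀ S ∈ T0, 0 ≤ γ S) ∧ (∀ S ∈ T, 0 < ω S) ∧
    (∑ S ∈ T0, γ S • ind n S) + (∑ S ∈ T, ω S • ind n S) = ind n Finset.univ

open Classical in
noncomputable def spanColl (n : ℕ) (T : Finset (Finset (Fin n))) : Finset (Finset (Fin n)) :=
  Finset.univ.filter (fun S => ind n S ∈ Submodule.span ℝ (ind n '' (T : Set (Finset (Fin n)))))

/-- Rank of a collection: dimension of the span of its indicator vectors. -/
noncomputable def rk (n : ℕ) (T : Finset (Finset (Fin n))) : ℕ :=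
  Module.finrank ℝ (Submodule.span ℝ (ind n '' (T : Set (Finset (Fin n)))))

lemma ind_inj (n : ℕ) : Function.Injective (ind n) := by
  intro S T h
  ext i
  have hi := congrFun h i
  simp only [ind] at hi
  by_cases hS : i ∈ S <;> by_cases hT : i ∈ T <;> simp [hS, hT] at hi ⊢

/-- If `U` is `T0`-balanced and `U ⊆ V`, then `span(U) ∩ V` is `T0`-balanced. -/
theorem stmt2 (n : ℕ) (T0 U V : Finset (Finset (Fin n)))
    (hUV : U ⊆ V) (hU : IsT0Balanced n T0 U) :
    IsT0Balanced n T0 (spanColl n U ∩ V) := by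
  classical
  obtain ⟨γ, ω, hγ, hω, hsum⟩ := hU
  set W := spanColl n U ∩ V with hWdef
  have hUW : U ⊆ W := by
    intro S hS
    simp only [hWdef, Finset.mem_inter, spanColl, Finset.mem_filter, Finset.mem_univ, true_and]
    exact ⟨Submodule.subset_span ⟨S, by simpa using hS, rfl⟩, hUV hS⟩
  -- coefficients expressing each element of W \ U in terms of U
  have hc : ∀ S : Finset (Fin n), ∃ cS : Finset (Fin n) → ℝ,
      S ∈ W \ U → ind n S = ∑ T ∈ U, cS T • ind n T := by
    intro S
    by_cases hS : S ∈ W \ U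
    · have hmem : ind n S ∈ Submodule.span ℝ (ind n '' (U : Set (Finset (Fin n)))) := by
        have h1 := (Finset.mem_sdiff.mp hS).1
        simp only [hWdef, Finset.mem_inter, spanColl, Finset.mem_filter] at h1
        exact h1.1.2
      rw [show (ind n '' (U : Set (Finset (Fin n)))) = ((U.image (ind n) : Finset _) : Set _) by
        simp] at hmem
      rw [Submodule.mem_span_finset] at hmem
      obtain ⟨f, -, hf⟩ := hmem
      refine ⟨fun T => f (ind n T), fun _ => ?_⟩
      rw [← hf, Finset.sum_image (fun a _ b _ h => ind_inj n h)]
    · exact ⟨0, fun h => absurd h hS⟩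
  choose c hcspec using hc
  set M : Finset (Fin n) → ℝ := fun T => ∑ S ∈ W \ U, c S T with hM
  -- choose ε
  set s : Finset ℝ := insert (1 : ℝ) (U.image fun T => ω T / (|M T| + 1)) with hs
  have hs_ne : s.Nonempty := ⟨1, Finset.mem_insert_self _ _⟩
  set ε : ℝ := s.min' hs_ne with hε
  have hε0 : 0 < ε := by
    rw [hε, Finset.lt_min'_iff]
    intro b hb
    rw [hs, Finset.mem_insert] at hb
    rcases hb with rfl | hb
    · norm_num
    · obtain ⟨T, hT, rfl⟩ := Finset.mem_image.mp hb
      exact div_pos (hω T hT) (by positivity)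
  have hεT : ∀ T ∈ U, ε * |M T| < ω T := by
    intro T hT
    have hle : ε ≤ ω T / (|M T| + 1) :=
      Finset.min'_le _ _ (Finset.mem_insert_of_mem (Finset.mem_image_of_mem _ hT))
    have h1 : ε * (|M T| + 1) ≤ ω T := (le_div_iff₀ (by positivity)).mp hle
    nlinarith [abs_nonneg (M T)]
  set ω' : Finset (Fin n) → ℝ := fun S => if S ∈ U then ω S - ε * M S else ε with hω'
  refine ⟨γ, ω', hγ, ?_, ?_⟩
  · intro S hS
    by_cases hSU : S ∈ U
    · have h1 := hεT S hSU
      have h2 : ε * M S ≤ ε * |M S| :=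
        mul_le_mul_of_nonneg_left (le_abs_self _) hε0.le
      simp only [hω', if_pos hSU]
      linarith
    · simp only [hω', if_neg hSU]
      exact hε0
  · have key : ∑ S ∈ W, ω' S • ind n S = ∑ T ∈ U, ω T • ind n T := by
      rw [← Finset.sum_sdiff hUW]
      have h1 : ∑ S ∈ W \ U, ω' S • ind n S = ∑ T ∈ U, (ε * M T) • ind n T := by
        calc ∑ S ∈ W \ U, ω' S • ind n S
            = ∑ S ∈ W \ U, ∑ T ∈ U, (ε * c S T) • ind n T := by
              apply Finset.sum_congr rfl
              intro S hS
              rw [show ω' S = ε from if_neg (Finset.mem_sdiff.mp hS).2, hcspec S hS,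
                Finset.smul_sum]
              simp [smul_smul]
          _ = ∑ T ∈ U, (ε * M T) • ind n T := by
              rw [Finset.sum_comm]
              apply Finset.sum_congr rfl
              intro T _
              rw [hM, Finset.mul_sum, Finset.sum_smul]
      have h2 : ∑ T ∈ U, ω' T • ind n T
          = ∑ T ∈ U, ω T • ind n T - ∑ T ∈ U, (ε * M T) • ind n T := by
        rw [← Finset.sum_sub_distrib]
        apply Finset.sum_congr rfl
        intro T hT
        rw [show ω' T = ω T - ε * M T from if_pos hT, sub_smul]
      rw [h1, h2]
      abel
    rw [key]
    exact hsum
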